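/- Let Q be an invertible real d×d matrix, let Q̂ = Q / ‖Q‖_F be its spectral-bounding normalization, and let M = Q̂ · Q̂ᵀ. Then M is symmetric positive definite, every eigenvalue of M lies in the interval (0, 1], and ‖I − M‖₂ < 1, where ‖·‖₂ denotes the L2 operator norm (spectral norm) of a matrix. -/

import Mathlib

open Matrix

/-- The Frobenius norm of a real matrix: `‖M‖_F = sqrt (∑ i j, M i j ^ 2)`. -/
noncomputable def frobNorm {m n : ℕ} (M : Matrix (Fin m) (Fin n) ℝ) : ℝ :=
  Real.sqrt (∑ i, ∑ j, (M i j) ^ 2)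

/-- The L2 operator norm (spectral norm) of a real square matrix, i.e. the operator norm
of the induced linear map on Euclidean space `ℝ^d`. -/
noncomputable def l2OpNorm {d : ℕ} (M : Matrix (Fin d) (Fin d) ℝ) : ℝ :=
  ‖LinearMap.toContinuousLinearMap (Matrix.toEuclideanLin M)‖

/-!
Let `T` be the operator of `Q̂` on Euclidean space. Then `‖T‖ ≤ ‖Q̂‖_F ≤ 1`, so `M = T T*` has
`‖M‖ ≤ 1`, and for every `x`
`‖x - M x‖² = ‖x‖² - 2 ‖T* x‖² + ‖T T* x‖² ≤ ‖x‖² - ‖T* x‖²`,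
which is `< ‖x‖²` for `x ≠ 0` because `T*` is injective. By compactness of the unit sphere,
`‖I - M‖ < 1`. An eigenvalue `μ` of `M` then has `|μ| ≤ ‖M‖ ≤ 1` and `|1 - μ| ≤ ‖I - M‖ < 1`,
hence `μ ∈ (0, 1]`.
-/

section Frobenius

attribute [local instance] Matrix.frobeniusNormedAddCommGroup Matrix.frobeniusNormSMulClass

theorem frobNorm_eq_norm {m n : ℕ} (A : Matrix (Fin m) (Fin n) ℝ) : frobNorm A = ‖A‖ := by
  simp [frobNorm, frobenius_norm_def, Real.sqrt_eq_rpow, Real.norm_eq_abs, sq_abs]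

theorem frobNorm_eq_zero {m n : ℕ} {A : Matrix (Fin m) (Fin n) ℝ} : frobNorm A = 0 ↔ A = 0 := by
  rw [frobNorm_eq_norm, norm_eq_zero]

theorem frobNorm_smul {m n : ℕ} (c : ℝ) (A : Matrix (Fin m) (Fin n) ℝ) :
    frobNorm (c • A) = |c| * frobNorm A := by
  rw [frobNorm_eq_norm, frobNorm_eq_norm, norm_smul, Real.norm_eq_abs]

theorem frobNorm_nonneg {m n : ℕ} (A : Matrix (Fin m) (Fin n) ℝ) : 0 ≤ frobNorm A :=
  Real.sqrt_nonneg _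

theorem norm_toLp_mulVec_le_frobNorm_mul {m n : ℕ} (A : Matrix (Fin m) (Fin n) ℝ)
    (x : Fin n → ℝ) : ‖WithLp.toLp 2 (A *ᵥ x)‖ ≤ frobNorm A * ‖WithLp.toLp 2 x‖ := by
  rw [frobNorm_eq_norm, ← frobenius_norm_replicateCol (ι := Unit),
    ← frobenius_norm_replicateCol (ι := Unit), replicateCol_mulVec]
  exact frobenius_norm_mul _ _

end Frobenius

-- Not `= 1`: for `A = 0` the inverse is the junk value `0⁻¹ = 0`.
theorem frobNorm_inv_smul_self_le_one {m n : ℕ} (A : Matrix (Fin m) (Fin n) ℝ) :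
    frobNorm ((frobNorm A)⁻¹ • A) ≤ 1 := by
  rw [frobNorm_smul, abs_of_nonneg (inv_nonneg.2 (frobNorm_nonneg A))]
  exact inv_mul_le_one

theorem isUnit_inv_frobNorm_smul {d : ℕ} {A : Matrix (Fin d) (Fin d) ℝ} (hA : IsUnit A) :
    IsUnit ((frobNorm A)⁻¹ • A) := by
  rcases eq_or_ne (frobNorm A) 0 with h | h
  · simpa [frobNorm_eq_zero.1 h] using hA
  · simpa [Units.smul_def] using IsUnit.smul (Units.mk0 _ (inv_ne_zero h)) hA

theorem l2OpNorm_eq_norm_toEuclideanCLM {d : ℕ} (A : Matrix (Fin d) (Fin d) ℝ) :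
    l2OpNorm A = ‖toEuclideanCLM (𝕜 := ℝ) A‖ :=
  rfl

theorem l2OpNorm_le_frobNorm {d : ℕ} (A : Matrix (Fin d) (Fin d) ℝ) : l2OpNorm A ≤ frobNorm A :=
  ContinuousLinearMap.opNorm_le_bound _ (frobNorm_nonneg A) fun x =>
    norm_toLp_mulVec_le_frobNorm_mul A x.ofLp

theorem abs_le_l2OpNorm_of_mulVec_eq_smul {d : ℕ} {A : Matrix (Fin d) (Fin d) ℝ}
    {v : Fin d → ℝ} {μ : ℝ} (hv : v ≠ 0) (hAv : A *ᵥ v = μ • v) : |μ| ≤ l2OpNorm A := by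
  have hpos : 0 < ‖WithLp.toLp 2 v‖ := norm_pos_iff.2 (by simpa using hv)
  have h := (toEuclideanCLM (𝕜 := ℝ) A).le_opNorm (WithLp.toLp 2 v)
  rw [toEuclideanCLM_toLp, hAv, WithLp.toLp_smul, norm_smul, Real.norm_eq_abs] at h
  exact le_of_mul_le_mul_right h hpos

namespace ContinuousLinearMap

theorem norm_lt_one_of_forall_norm_apply_lt {𝕜 E F : Type*} [RCLike 𝕜] [NormedAddCommGroup E]
    [NormedSpace 𝕜 E] [FiniteDimensional 𝕜 E] [NormedAddCommGroup F] [NormedSpace 𝕜 F]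
    (f : E →L[𝕜] F) (h : ∀ x ≠ 0, ‖f x‖ < ‖x‖) : ‖f‖ < 1 := by
  rcases subsingleton_or_nontrivial E with hE | hE
  · simp [Subsingleton.elim f 0]
  have : NormedSpace ℝ E := NormedSpace.restrictScalars ℝ 𝕜 E
  have : ProperSpace E := FiniteDimensional.proper_rclike 𝕜 E
  obtain ⟨x, hx, hfx⟩ := ((isCompact_sphere (0 : E) 1).image f.continuous.norm).sSup_mem
    ((NormedSpace.sphere_nonempty.2 zero_le_one).image _)
  have hx1 : ‖x‖ = 1 := mem_sphere_zero_iff_norm.1 hx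
  rw [← f.sSup_sphere_eq_norm, ← hfx, ← hx1]
  exact h x (ne_zero_of_norm_ne_zero (by rw [hx1]; exact one_ne_zero))

variable {𝕜 E F : Type*} [RCLike 𝕜] [NormedAddCommGroup E] [InnerProductSpace 𝕜 E]
  [CompleteSpace E] [NormedAddCommGroup F] [InnerProductSpace 𝕜 F] [CompleteSpace F]

theorem norm_sub_apply_adjoint_apply_sq_le {T : E →L[𝕜] F} (hT : ‖T‖ ≤ 1) (x : F) :
    ‖x - T (adjoint T x)‖ ^ 2 ≤ ‖x‖ ^ 2 - ‖adjoint T x‖ ^ 2 := by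
  have hinner : RCLike.re (inner 𝕜 x (T (adjoint T x))) = ‖adjoint T x‖ ^ 2 := by
    rw [← adjoint_inner_left, inner_self_eq_norm_sq]
  have hcontr : ‖T (adjoint T x)‖ ≤ ‖adjoint T x‖ := by
    simpa using T.le_of_opNorm_le hT (adjoint T x)
  rw [norm_sub_sq (𝕜 := 𝕜), hinner]
  nlinarith [norm_nonneg (T (adjoint T x))]

theorem norm_one_sub_comp_adjoint_lt_one [FiniteDimensional 𝕜 F] {T : E →L[𝕜] F}
    (hT : ‖T‖ ≤ 1) (hinj : Function.Injective (adjoint T)) : ‖1 - T ∘L adjoint T‖ < 1 := by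
  refine norm_lt_one_of_forall_norm_apply_lt _ fun x hx => ?_
  have hTx : 0 < ‖adjoint T x‖ := norm_pos_iff.2 ((map_ne_zero_iff _ hinj).2 hx)
  have hsq := norm_sub_apply_adjoint_apply_sq_le hT x
  rw [← pow_lt_pow_iff_left₀ (norm_nonneg _) (norm_nonneg _) two_ne_zero]
  simp only [_root_.sub_apply, one_apply_eq_self, comp_apply]
  linarith [pow_pos hTx 2]

end ContinuousLinearMap

/-- Spectral bounding: if `Q` is invertible and `Q̂ = Q / ‖Q‖_F`, then `M = Q̂ Q̂ᵀ` is
symmetric positive definite, its eigenvalues lie in `(0, 1]`, and `‖I − M‖₂ < 1`. -/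
theorem spectral_bounding {d : ℕ} (Q : Matrix (Fin d) (Fin d) ℝ) (hQ : IsUnit Q)
    (Qhat : Matrix (Fin d) (Fin d) ℝ) (hQhat : Qhat = (frobNorm Q)⁻¹ • Q)
    (M : Matrix (Fin d) (Fin d) ℝ) (hM : M = Qhat * Qhatᵀ) :
    M.PosDef ∧
      (∀ μ : ℝ, Module.End.HasEigenvalue (Matrix.toLin' M) μ → μ ∈ Set.Ioc (0 : ℝ) 1) ∧
      l2OpNorm (1 - M) < 1 := by
  have hQhat_unit : IsUnit Qhat := hQhat ▸ isUnit_inv_frobNorm_smul hQ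
  set T := toEuclideanCLM (𝕜 := ℝ) (n := Fin d) Qhat
  have hT : ‖T‖ ≤ 1 := (l2OpNorm_le_frobNorm Qhat).trans (hQhat ▸ frobNorm_inv_smul_self_le_one Q)
  have hMT : toEuclideanCLM (𝕜 := ℝ) M = T ∘L ContinuousLinearMap.adjoint T := by
    rw [hM, ← conjTranspose_eq_transpose_of_trivial, ← star_eq_conjTranspose, map_mul, map_star,
      ContinuousLinearMap.star_eq_adjoint]
    rfl
  have hnorm_M : l2OpNorm M ≤ 1 := by
    rw [l2OpNorm_eq_norm_toEuclideanCLM, hMT]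
    calc _ ≤ ‖T‖ * ‖ContinuousLinearMap.adjoint T‖ := ContinuousLinearMap.opNorm_comp_le _ _
      _ ≤ 1 := mul_le_one₀ hT (norm_nonneg _) (by rwa [LinearIsometryEquiv.norm_map])
  have hnorm_one_sub : l2OpNorm (1 - M) < 1 := by
    have hinj : Function.Injective (ContinuousLinearMap.adjoint T) := by
      rw [← ContinuousLinearMap.star_eq_adjoint]
      exact (ContinuousLinearMap.isUnit_iff_bijective.1 (hQhat_unit.map _).star).injective
    rw [l2OpNorm_eq_norm_toEuclideanCLM, map_sub, map_one, hMT]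
    exact ContinuousLinearMap.norm_one_sub_comp_adjoint_lt_one hT hinj
  refine ⟨?_, fun μ hμ => ?_, hnorm_one_sub⟩
  · rw [hM, ← conjTranspose_eq_transpose_of_trivial]
    exact PosDef.mul_conjTranspose_self _ (vecMul_injective_iff_isUnit.2 hQhat_unit)
  · obtain ⟨v, hv⟩ := hμ.exists_hasEigenvector
    have hMv : M *ᵥ v = μ • v := by simpa using hv.apply_eq_smul
    have hμ_le := abs_le_l2OpNorm_of_mulVec_eq_smul hv.2 hMv
    have hμ_shift := abs_le_l2OpNorm_of_mulVec_eq_smul (A := 1 - M) (μ := 1 - μ) hv.2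
      (by rw [sub_mulVec, one_mulVec, hMv, sub_smul, one_smul])
    constructor <;> linarith [le_abs_self μ, le_abs_self (1 - μ)]
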